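/- arXiv:1904.07984 — 10 statements merged into one kernel-verified Lean document; each statement's English description precedes it below -/
import Mathlib

section
/- Refinement axiom K⟨&⟩: Suppose that for all t ∈ [0,T), if φ(s) ∈ Q \ P for all s ∈ [0,t] then φ(t) ∉ G. If there exists τ with φ(τ) ∈ G and φ(s) ∈ Q for all s ∈ [0,τ], then there exists τ' ≤ τ with φ(τ') ∈ P and φ(s) ∈ Q for all s ∈ [0,τ']. -/
/-- Refinement axiom K⟨&⟩: if the trajectory cannot reach `G` without first
reaching `P` (while staying in `Q`), then reaching `G` in `Q` implies reaching
`P` in `Q` (at an earlier or equal time). -/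
theorem refinement_K (n : ℕ) (φ : ℝ → (Fin n → ℝ)) (P Q G : Set (Fin n → ℝ))
    (href : ∀ t : ℝ, 0 ≤ t → (∀ s ∈ Set.Icc (0:ℝ) t, φ s ∈ Q \ P) → φ t ∉ G)
    (τ : ℝ) (hτ : 0 ≤ τ) (hG : φ τ ∈ G) (hQ : ∀ s ∈ Set.Icc (0:ℝ) τ, φ s ∈ Q) :
    ∃ τ' : ℝ, 0 ≤ τ' ∧ τ' ≤ τ ∧ φ τ' ∈ P ∧ ∀ s ∈ Set.Icc (0:ℝ) τ', φ s ∈ Q := by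
  by_contra h
  push_neg at h
  have hnp : ∀ s ∈ Set.Icc (0:ℝ) τ, φ s ∉ P := by
    intro s hs hP
    obtain ⟨u, hu, hnQ⟩ := h s hs.1 hs.2 hP
    exact hnQ (hQ u ⟨hu.1, hu.2.trans hs.2⟩)
  exact href τ hτ (fun s hs => ⟨hQ s hs, hnp s hs⟩) hG
end

section
/- Closed/closed topological refinement (COR, closed case): Let P and Q be closed subsets of ℝⁿ and φ : [0,T) → ℝⁿ a continuous curve with φ(0) ∉ P. Assume that for all t, if φ(s) ∉ P for all s ∈ [0,t] (and φ(s) ∈ R for all s ∈ [0,t]), then φ(t) ∈ Q. If there exists τ with φ(τ) ∈ P and φ(s) ∈ R for all s ∈ [0,τ], then there exists τ' ≤ τ with φ(τ') ∈ P and φ(s) ∈ Q for all s ∈ [0,τ']. -/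
/-- Topological refinement (COR), closed/closed case: for closed `P` and `Q`,
if the trajectory stays in `Q` as long as it has avoided `P` (while in `R`),
then reaching `P` within `R` implies reaching `P` within `Q`. -/
theorem refinement_COR_closed (n : ℕ) (φ : ℝ → (Fin n → ℝ))
    (P Q R : Set (Fin n → ℝ)) (hP : IsClosed P) (hQ : IsClosed Q)
    (hφ : ContinuousOn φ (Set.Ici (0:ℝ))) (h0 : φ 0 ∉ P)
    (href : ∀ t : ℝ, 0 ≤ t →
      (∀ s ∈ Set.Icc (0:ℝ) t, φ s ∉ P ∧ φ s ∈ R) → φ t ∈ Q)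
    (τ : ℝ) (hτ : 0 ≤ τ) (hPτ : φ τ ∈ P) (hR : ∀ s ∈ Set.Icc (0:ℝ) τ, φ s ∈ R) :
    ∃ τ' : ℝ, 0 ≤ τ' ∧ τ' ≤ τ ∧ φ τ' ∈ P ∧ ∀ s ∈ Set.Icc (0:ℝ) τ', φ s ∈ Q := by
  set S : Set ℝ := Set.Icc 0 τ ∩ φ ⁻¹' P with hS
  have hScl : IsClosed S := by
    have := (hφ.mono (by intro x hx; exact hx.1 : Set.Icc (0:ℝ) τ ⊆ Set.Ici 0))
    exact this.preimage_isClosed_of_isClosed isClosed_Icc hP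
  have hSne : S.Nonempty := ⟨τ, ⟨hτ, le_refl τ⟩, hPτ⟩
  have hSbdd : BddBelow S := ⟨0, fun x hx => hx.1.1⟩
  set τ' := sInf S with hτ'
  have hmem : τ' ∈ S := hScl.csInf_mem hSne hSbdd
  have h0τ' : 0 ≤ τ' := hmem.1.1
  have hτ'τ : τ' ≤ τ := hmem.1.2
  have hPτ' : φ τ' ∈ P := hmem.2
  -- before τ', not in P
  have hnotP : ∀ s, 0 ≤ s → s < τ' → φ s ∉ P := by
    intro s hs hsτ' hsP
    exact absurd (csInf_le hSbdd ⟨⟨hs, hsτ'.le.trans hτ'τ⟩, hsP⟩) (not_le.mpr hsτ')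
  have hQlt : ∀ s, 0 ≤ s → s < τ' → φ s ∈ Q := by
    intro s hs hsτ'
    exact href s hs fun u hu => ⟨hnotP u hu.1 (lt_of_le_of_lt hu.2 hsτ'),
      hR u ⟨hu.1, hu.2.trans (hsτ'.le.trans hτ'τ)⟩⟩
  have hτ'pos : 0 < τ' := lt_of_le_of_ne h0τ' (fun h => h0 (h ▸ hPτ'))
  have hQτ' : φ τ' ∈ Q := by
    have htend : Filter.Tendsto φ (nhdsWithin τ' (Set.Ico 0 τ')) (nhds (φ τ')) :=
      (hφ τ' (Set.mem_Ici.mpr h0τ')).mono_left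
        (nhdsWithin_mono τ' (fun x hx => hx.1))
    have hne : (nhdsWithin τ' (Set.Ico 0 τ')).NeBot := by
      apply mem_closure_iff_nhdsWithin_neBot.mp
      rw [closure_Ico (ne_of_lt hτ'pos)]
      exact ⟨h0τ', le_refl _⟩
    refine hQ.mem_of_tendsto htend ?_
    filter_upwards [self_mem_nhdsWithin] with s hs
    exact hQlt s hs.1 hs.2
  refine ⟨τ', h0τ', hτ'τ, hPτ', fun s hs => ?_⟩
  rcases eq_or_lt_of_le hs.2 with h | h
  · exact h ▸ hQτ'
  · exact hQlt s hs.1 h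
end

section
/- Open/open topological refinement (COR, open case): Let P and Q be open subsets of ℝⁿ and φ : [0,T) → ℝⁿ a continuous curve with φ(0) ∉ P. Assume that for all t, if φ(s) ∈ R \ P for all s ∈ [0,t], then φ(t) ∈ Q. If there exists τ with φ(τ) ∈ P and φ(s) ∈ R for all s ∈ [0,τ], then there exists τ' ≤ τ with φ(τ') ∈ P and φ(s) ∈ Q for all s ∈ [0,τ']. -/
/-- Topological refinement (COR), open/open case: for open `P` and `Q`,
if the trajectory stays in `Q` as long as it has stayed in `R` and avoided `P`,
then reaching `P` within `R` implies reaching `P` within `Q`. -/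
theorem refinement_COR_open (n : ℕ) (φ : ℝ → (Fin n → ℝ))
    (P Q R : Set (Fin n → ℝ)) (hP : IsOpen P) (hQ : IsOpen Q)
    (hφ : ContinuousOn φ (Set.Ici (0:ℝ))) (h0 : φ 0 ∉ P)
    (href : ∀ t : ℝ, 0 ≤ t →
      (∀ s ∈ Set.Icc (0:ℝ) t, φ s ∈ R \ P) → φ t ∈ Q)
    (τ : ℝ) (hτ : 0 ≤ τ) (hPτ : φ τ ∈ P) (hR : ∀ s ∈ Set.Icc (0:ℝ) τ, φ s ∈ R) :
    ∃ τ' : ℝ, 0 ≤ τ' ∧ τ' ≤ τ ∧ φ τ' ∈ P ∧ ∀ s ∈ Set.Icc (0:ℝ) τ', φ s ∈ Q := by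
  set S : Set ℝ := {t | t ∈ Set.Icc (0:ℝ) τ ∧ ∀ s ∈ Set.Icc (0:ℝ) t, φ s ∉ P} with hS
  have h0S : (0:ℝ) ∈ S := by
    refine ⟨⟨le_refl 0, hτ⟩, ?_⟩
    intro s hs
    have : s = 0 := le_antisymm hs.2 hs.1
    simpa [this] using h0
  have hne : S.Nonempty := ⟨0, h0S⟩
  have hbdd : BddAbove S := ⟨τ, fun t ht => ht.1.2⟩
  set σ := sSup S with hσdef
  have hσ0 : 0 ≤ σ := le_csSup hbdd h0S
  have hστ : σ ≤ τ := csSup_le hne fun t ht => ht.1.2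
  -- every point strictly before σ avoids P
  have hlt : ∀ s, 0 ≤ s → s < σ → φ s ∉ P := by
    intro s hs0 hsσ hsP
    obtain ⟨t, htS, hst⟩ := exists_lt_of_lt_csSup hne hsσ
    exact htS.2 s ⟨hs0, hst.le⟩ hsP
  -- σ itself avoids P
  have hσP : φ σ ∉ P := by
    intro hmem
    have hσpos : 0 < σ := by
      rcases lt_or_eq_of_le hσ0 with h | h
      · exact h
      · exact absurd (h ▸ hmem) h0
    have hc : ContinuousWithinAt φ (Set.Ici (0:ℝ)) σ := hφ σ (Set.mem_Ici.2 hσ0)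
    have hnhds : φ ⁻¹' P ∈ nhdsWithin σ (Set.Ici (0:ℝ)) :=
      hc.preimage_mem_nhdsWithin (hP.mem_nhds hmem)
    rw [Metric.mem_nhdsWithin_iff] at hnhds
    obtain ⟨ε, hε, hball⟩ := hnhds
    set s := max 0 (σ - ε / 2) with hsdef
    have hs0 : 0 ≤ s := le_max_left _ _
    have hsσ : s < σ := by
      apply max_lt hσpos
      linarith
    have hdist : dist s σ < ε := by
      rw [Real.dist_eq, abs_lt]
      constructor
      · have : σ - ε / 2 ≤ s := le_max_right _ _
        linarith
      · linarith
    exact hlt s hs0 hsσ (hball ⟨Metric.mem_ball.2 hdist, Set.mem_Ici.2 hs0⟩)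
  have hle : ∀ s, 0 ≤ s → s ≤ σ → φ s ∉ P := by
    intro s hs0 hsσ
    rcases lt_or_eq_of_le hsσ with h | h
    · exact hlt s hs0 h
    · exact h ▸ hσP
  -- the trajectory lies in Q on [0, σ]
  have hQle : ∀ s, 0 ≤ s → s ≤ σ → φ s ∈ Q := by
    intro s hs0 hsσ
    refine href s hs0 fun u hu => ⟨hR u ⟨hu.1, hu.2.trans (hsσ.trans hστ)⟩,
      hle u hu.1 (hu.2.trans hsσ)⟩
  have hστlt : σ < τ := lt_of_le_of_ne hστ fun h => hσP (h ▸ hPτ)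
  -- Q is open; extend membership in Q slightly past σ
  have hσQ : φ σ ∈ Q := hQle σ hσ0 le_rfl
  have hc : ContinuousWithinAt φ (Set.Ici (0:ℝ)) σ := hφ σ (Set.mem_Ici.2 hσ0)
  have hnhds : φ ⁻¹' Q ∈ nhdsWithin σ (Set.Ici (0:ℝ)) :=
    hc.preimage_mem_nhdsWithin (hQ.mem_nhds hσQ)
  rw [Metric.mem_nhdsWithin_iff] at hnhds
  obtain ⟨ε, hε, hball⟩ := hnhds
  set δ := min (ε / 2) (τ - σ) with hδdef
  have hδpos : 0 < δ := lt_min (by linarith) (by linarith)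
  have hδτ : σ + δ ≤ τ := by
    have : δ ≤ τ - σ := min_le_right _ _
    linarith
  -- points in (σ, σ + δ] are in Q
  have hQmid : ∀ s, σ < s → s ≤ σ + δ → φ s ∈ Q := by
    intro s hs1 hs2
    have hs0 : 0 ≤ s := hσ0.trans hs1.le
    have hdist : dist s σ < ε := by
      rw [Real.dist_eq, abs_lt]
      have : δ ≤ ε / 2 := min_le_left _ _
      constructor <;> [linarith; linarith]
    exact hball ⟨Metric.mem_ball.2 hdist, Set.mem_Ici.2 hs0⟩
  -- σ + δ is not in S, so some point in (σ, σ + δ] hits P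
  have hnot : σ + δ ∉ S := fun h => absurd (le_csSup hbdd h) (by linarith)
  have hex : ∃ s ∈ Set.Icc (0:ℝ) (σ + δ), φ s ∈ P := by
    by_contra hcon
    push_neg at hcon
    exact hnot ⟨⟨by linarith, hδτ⟩, hcon⟩
  obtain ⟨τ', hτ'mem, hτ'P⟩ := hex
  have hτ'σ : σ < τ' := by
    by_contra h
    push_neg at h
    exact hle τ' hτ'mem.1 h hτ'P
  refine ⟨τ', hτ'mem.1, hτ'mem.2.trans hδτ, hτ'P, fun s hs => ?_⟩
  rcases le_or_gt s σ with h | h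
  · exact hQle s hs.1 h
  · exact hQmid s h (hs.2.trans hτ'mem.2)
end

section
/- Unsoundness of the naive refinement: There exist a polynomial ODE x' = f(x), sets P, Q, R (semialgebraic), and an initial state such that every solution segment staying in R ∩ Pᶜ stays in Q, and the solution reaches P while staying in R, yet the solution does NOT reach P while staying in Q (i.e., the conjectured axiom DR⟨·⟩-with-negated-postcondition is invalid without topological side conditions). -/
/-- Unsoundness of the naive refinement axiom: there is a polynomial ODE (here
one-dimensional), sets `P`, `Q`, `R`, and a solution `φ` such that every solution
segment staying in `R \ P` stays in `Q`, and the solution reaches `P` while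
staying in `R`, yet it does not reach `P` while staying in `Q`. -/
theorem naive_refinement_unsound :
    ∃ (pf : Polynomial ℝ) (f : ℝ → ℝ) (P Q R : Set ℝ) (φ : ℝ → ℝ),
      f = (fun x => Polynomial.eval x pf) ∧
      (∀ t : ℝ, HasDerivAt φ (f (φ t)) t) ∧
      (∀ t : ℝ, 0 ≤ t → (∀ s ∈ Set.Icc (0:ℝ) t, φ s ∈ R ∧ φ s ∉ P) → φ t ∈ Q) ∧
      (∃ τ : ℝ, 0 ≤ τ ∧ φ τ ∈ P ∧ ∀ s ∈ Set.Icc (0:ℝ) τ, φ s ∈ R) ∧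
      ¬ (∃ τ : ℝ, 0 ≤ τ ∧ φ τ ∈ P ∧ ∀ s ∈ Set.Icc (0:ℝ) τ, φ s ∈ Q) := by
  refine ⟨1, fun x => Polynomial.eval x 1, {x | 1 ≤ x}, {x | x < 1}, Set.univ, id,
    rfl, ?_, ?_, ?_, ?_⟩
  · intro t
    simpa using (hasDerivAt_id t)
  · intro t ht h
    have := (h t ⟨ht, le_refl t⟩).2
    simpa using lt_of_not_ge this
  · exact ⟨1, by norm_num, by norm_num, fun s _ => trivial⟩
  · rintro ⟨τ, hτ, hP, hQ⟩
    have := hQ τ ⟨hτ, le_refl τ⟩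
    simp only [id, Set.mem_setOf_eq] at hP this; linarith
end

section
/- Differential variant rule (dV≥): Let f be globally Lipschitz on ℝⁿ, p : ℝⁿ → ℝ a polynomial, and ε > 0 a constant. Suppose that at every state y with p(y) < 0, the Lie derivative ∇p(y)·f(y) ≥ ε. Then for every initial state x₀, the solution φ of x' = f(x) from x₀ satisfies p(φ(τ)) ≥ 0 for some τ ≥ 0. -/
open MvPolynomial Set

/-!
Along a solution `φ`, the chain rule makes `t ↦ p (φ t)` differentiable with derivative the Lie
derivative `∇p · f` at `φ t`. While `p (φ t) < 0` this is at least `ε`, so by the mean value theorem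
`p ∘ φ` cannot stay negative on `[0, T]` for `T = -p(φ 0)/ε`.
-/

theorem MvPolynomial.hasDerivAt_eval_comp {𝕜 σ : Type*} [NontriviallyNormedField 𝕜] [Fintype σ]
    (p : MvPolynomial σ 𝕜) {φ : 𝕜 → σ → 𝕜} {φ' : σ → 𝕜} {t : 𝕜} (hφ : HasDerivAt φ φ' t) :
    HasDerivAt (fun s => eval (φ s) p) (∑ i, eval (φ t) (pderiv i p) * φ' i) t := by
  classical
  induction p using MvPolynomial.induction_on with
  | C a => simpa using hasDerivAt_const t a
  | add p q hp hq => simpa [Finset.sum_add_distrib, add_mul] using hp.fun_add hq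
  | mul_X p i hp =>
    simp only [eval_mul, eval_X]
    refine (hp.fun_mul (hasDerivAt_pi.1 hφ i)).congr_deriv ?_
    simp only [Derivation.leibniz, pderiv_X, smul_eq_mul, map_add, map_mul, eval_X, add_mul,
      Finset.sum_add_distrib, Finset.sum_mul]
    rw [add_comm]
    congr 1
    · simp [Pi.single_apply, apply_ite]
    · exact Finset.sum_congr rfl fun j _ => by ring

theorem exists_mem_Icc_nonneg_of_le_deriv_of_neg {g g' : ℝ → ℝ} {ε : ℝ} (hε : 0 < ε)
    (hg : ∀ t, 0 ≤ t → HasDerivAt g (g' t) t) (hg' : ∀ t, 0 ≤ t → g t < 0 → ε ≤ g' t) :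
    ∃ τ ∈ Icc 0 (max 0 (-g 0 / ε)), 0 ≤ g τ := by
  set T := max 0 (-g 0 / ε)
  by_contra! hneg
  have hT : 0 ≤ T := le_max_left _ _
  have hgrowth : ε * (T - 0) ≤ g T - g 0 := by
    refine (convex_Icc 0 T).mul_sub_le_image_sub_of_le_deriv
      (fun t ht => (hg t ht.1).continuousAt.continuousWithinAt)
      (fun t ht => (hg t (interior_subset ht).1).differentiableAt.differentiableWithinAt)
      (fun t ht => ?_) 0 ⟨le_rfl, hT⟩ T ⟨hT, le_rfl⟩ hT
    have ht := interior_subset ht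
    rw [(hg t ht.1).deriv]
    exact hg' t ht.1 (hneg t ht)
  have hεT : -g 0 ≤ ε * T := by
    rw [← div_le_iff₀' hε]
    exact le_max_right _ _
  linarith [hneg T ⟨hT, le_rfl⟩]

theorem dV_ge_general (n : ℕ) (f : (Fin n → ℝ) → (Fin n → ℝ)) (p : MvPolynomial (Fin n) ℝ) (ε : ℝ)
    (hε : 0 < ε)
    (hlie : ∀ y : Fin n → ℝ, eval y p < 0 →
      ε ≤ ∑ i : Fin n, eval y (pderiv i p) * f y i)
    (φ : ℝ → (Fin n → ℝ))
    (hsol : ∀ t : ℝ, 0 ≤ t → HasDerivAt φ (f (φ t)) t) :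
    ∃ τ : ℝ, 0 ≤ τ ∧ 0 ≤ eval (φ τ) p := by
  obtain ⟨τ, hτ, hpτ⟩ := exists_mem_Icc_nonneg_of_le_deriv_of_neg hε
    (fun t ht => p.hasDerivAt_eval_comp (hsol t ht)) (fun t _ hpt => hlie (φ t) hpt)
  exact ⟨τ, hτ.1, hpτ⟩

/-- Differential variant rule dV≥: if `f` is globally Lipschitz and the Lie
derivative of the polynomial `p` along `f` is at least `ε > 0` wherever `p < 0`,
then along every (globally existing) solution, `p` eventually becomes `≥ 0`. -/
theorem dV_ge (n : ℕ) (f : (Fin n → ℝ) → (Fin n → ℝ)) (K : NNReal)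
    (hf : LipschitzWith K f) (p : MvPolynomial (Fin n) ℝ) (ε : ℝ) (hε : 0 < ε)
    (hlie : ∀ y : Fin n → ℝ, eval y p < 0 →
      ε ≤ ∑ i : Fin n, eval y (pderiv i p) * f y i)
    (x₀ : Fin n → ℝ) (φ : ℝ → (Fin n → ℝ)) (hφ0 : φ 0 = x₀)
    (hsol : ∀ t : ℝ, 0 ≤ t → HasDerivAt φ (f (φ t)) t) :
    ∃ τ : ℝ, 0 ≤ τ ∧ 0 ≤ eval (φ τ) p :=
  dV_ge_general n f p ε hε hlie φ hsol
end

section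
/- Strict differential variant rule (dV>): Let f be globally Lipschitz on ℝⁿ, p polynomial, ε > 0 constant. If ∇p(y)·f(y) ≥ ε whenever p(y) ≤ 0, then every solution of x' = f(x) satisfies p(φ(τ)) > 0 for some τ ≥ 0. -/
/-!
Along a solution, `g t = p (φ t)` has derivative `∇p (φ t) ⬝ f (φ t)`. If `g` stayed `≤ 0` on
`[0, ∞)`, this derivative would be `≥ ε` there, so by the mean value theorem
`g t ≥ g 0 + ε t`, which is positive once `t > -g 0 / ε`.
-/

open MvPolynomial

theorem HasDerivAt.mvPolynomial_eval {𝕜 σ : Type*} [NontriviallyNormedField 𝕜] [Fintype σ]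
    {φ : 𝕜 → σ → 𝕜} {v : σ → 𝕜} {t : 𝕜} (hφ : HasDerivAt φ v t) (q : MvPolynomial σ 𝕜) :
    HasDerivAt (fun s => eval (φ s) q) (∑ i, eval (φ t) (pderiv i q) * v i) t := by
  induction q using MvPolynomial.induction_on with
  | C a => simpa using hasDerivAt_const t a
  | add q r hq hr => simpa only [map_add, add_mul, Finset.sum_add_distrib] using hq.fun_add hr
  | mul_X q i hq =>
    classical
    have hterm (j : σ) : eval (φ t) (pderiv j (q * X i)) * v j =
        eval (φ t) (pderiv j q) * v j * φ t i + if j = i then eval (φ t) q * v j else 0 := by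
      rw [pderiv_mul, pderiv_X]
      by_cases hji : j = i <;> simp [hji, add_mul, mul_right_comm]
    simp only [map_mul, eval_X, hterm, Finset.sum_add_distrib, ← Finset.sum_mul,
      Finset.sum_ite_eq', Finset.mem_univ, if_true]
    exact hq.fun_mul (hasDerivAt_pi.1 hφ i)

theorem mul_le_sub_of_hasDerivAt_ge {g g' : ℝ → ℝ} {C : ℝ}
    (hg : ∀ t, 0 ≤ t → HasDerivAt g (g' t) t) (hC : ∀ t, 0 ≤ t → C ≤ g' t) {t : ℝ} (ht : 0 ≤ t) :
    C * t ≤ g t - g 0 := by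
  have hcont : ContinuousOn g (Set.Ici 0) := fun s hs => (hg s hs).continuousAt.continuousWithinAt
  have hdiff : DifferentiableOn ℝ g (interior (Set.Ici 0)) := fun s hs =>
    (hg s (interior_subset hs)).differentiableAt.differentiableWithinAt
  have hderiv : ∀ s ∈ interior (Set.Ici (0 : ℝ)), C ≤ deriv g s := fun s hs => by
    rw [(hg s (interior_subset hs)).deriv]; exact hC s (interior_subset hs)
  simpa using (convex_Ici 0).mul_sub_le_image_sub_of_le_deriv hcont hdiff hderiv
    0 Set.self_mem_Ici t ht ht

theorem exists_pos_of_hasDerivAt_ge_of_nonpos {g g' : ℝ → ℝ} {ε : ℝ} (hε : 0 < ε)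
    (hg : ∀ t, 0 ≤ t → HasDerivAt g (g' t) t) (hε_le : ∀ t, 0 ≤ t → g t ≤ 0 → ε ≤ g' t) :
    ∃ τ, 0 ≤ τ ∧ 0 < g τ := by
  by_contra! hnonpos
  have hT : 0 ≤ (1 - g 0) / ε := div_nonneg (by linarith [hnonpos 0 le_rfl]) hε.le
  have hgrowth := mul_le_sub_of_hasDerivAt_ge hg (fun t ht => hε_le t ht (hnonpos t ht)) hT
  rw [mul_div_cancel₀ _ hε.ne'] at hgrowth
  linarith [hnonpos _ hT]

theorem dV_gt_general (n : ℕ) (f : (Fin n → ℝ) → (Fin n → ℝ))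
    (p : MvPolynomial (Fin n) ℝ) (ε : ℝ) (hε : 0 < ε)
    (hlie : ∀ y : Fin n → ℝ, eval y p ≤ 0 →
      ε ≤ ∑ i : Fin n, eval y (pderiv i p) * f y i)
    (φ : ℝ → (Fin n → ℝ))
    (hsol : ∀ t : ℝ, 0 ≤ t → HasDerivAt φ (f (φ t)) t) :
    ∃ τ : ℝ, 0 ≤ τ ∧ 0 < eval (φ τ) p :=
  exists_pos_of_hasDerivAt_ge_of_nonpos hε (fun t ht => (hsol t ht).mvPolynomial_eval p)
    fun t _ => hlie (φ t)

/-- Strict differential variant rule dV>: if `f` is globally Lipschitz and the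
Lie derivative of `p` along `f` is at least `ε > 0` wherever `p ≤ 0`, then along
every (globally existing) solution, `p` eventually becomes strictly positive. -/
theorem dV_gt (n : ℕ) (f : (Fin n → ℝ) → (Fin n → ℝ)) (K : NNReal)
    (hf : LipschitzWith K f) (p : MvPolynomial (Fin n) ℝ) (ε : ℝ) (hε : 0 < ε)
    (hlie : ∀ y : Fin n → ℝ, eval y p ≤ 0 →
      ε ≤ ∑ i : Fin n, eval y (pderiv i p) * f y i)
    (x₀ : Fin n → ℝ) (φ : ℝ → (Fin n → ℝ)) (hφ0 : φ 0 = x₀)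
    (hsol : ∀ t : ℝ, 0 ≤ t → HasDerivAt φ (f (φ t)) t) :
    ∃ τ : ℝ, 0 ≤ τ ∧ 0 < eval (φ τ) p :=
  dV_gt_general n f p ε hε hlie φ hsol
end

section
/- Counterexample to dV without global existence: The rule dV≥ fails for merely locally Lipschitz ODEs. There exists a locally Lipschitz (indeed polynomial) ODE x' = f(x) on ℝ², a polynomial p with ∇p·f ≥ ε > 0 everywhere where p < 0, and an initial state whose solution blows up in finite time before p reaches 0, so that p(φ(t)) < 0 for all t in the (finite) existence interval. -/
open MvPolynomial Set

/-!
The field `x' = x², y' = 1` increases `p = y - 2` at unit rate everywhere, but the solution from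
`(1, 0)` is `(1/(1 - t), t)`, which escapes to infinity at `t = 1`, long before `y` reaches `2`.
Maximality comes from the Riccati equation `u' = u²`: along any solution with `u 0 > 0`, the
quantity `u⁻¹ + t` is conserved, so no solution can outlive `t = (u 0)⁻¹`.
-/

section Riccati

variable {u : ℝ → ℝ} {b : ℝ}

theorem monotoneOn_of_hasDerivAt_sq (hu : ∀ t ∈ Icc 0 b, HasDerivAt u (u t ^ 2) t) :
    MonotoneOn u (Icc 0 b) := by
  refine monotoneOn_of_hasDerivWithinAt_nonneg (convex_Icc 0 b)
    (fun t ht => (hu t ht).continuousAt.continuousWithinAt) (fun t ht => ?_)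
    (fun t _ => sq_nonneg (u t))
  rw [interior_Icc] at ht
  exact (hu t (Ioo_subset_Icc_self ht)).hasDerivWithinAt

theorem inv_add_eq_of_hasDerivAt_sq (hu0 : 0 < u 0)
    (hu : ∀ t ∈ Icc 0 b, HasDerivAt u (u t ^ 2) t) :
    ∀ t ∈ Icc 0 b, (u t)⁻¹ + t = (u 0)⁻¹ := by
  have hpos : ∀ t ∈ Icc 0 b, 0 < u t := fun t ht =>
    hu0.trans_le <| monotoneOn_of_hasDerivAt_sq hu (left_mem_Icc.2 (ht.1.trans ht.2)) ht ht.1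
  have hconst : ∀ t ∈ Icc 0 b, HasDerivAt (fun s => (u s)⁻¹ + s) 0 t := fun t ht => by
    refine (((hu t ht).inv (hpos t ht).ne').add (hasDerivAt_id' t)).congr_deriv ?_
    field_simp [(hpos t ht).ne']
    norm_num
  intro t ht
  simpa using constant_of_has_deriv_right_zero
    (fun s hs => (hconst s hs).continuousAt.continuousWithinAt)
    (fun s hs => (hconst s (Ico_subset_Icc_self hs)).hasDerivWithinAt) t ht

theorem le_inv_of_hasDerivAt_sq {T : ℝ} (hu0 : 0 < u 0)
    (hu : ∀ t ∈ Ico 0 T, HasDerivAt u (u t ^ 2) t) : T ≤ (u 0)⁻¹ := by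
  by_contra! hT
  have hu' : ∀ t ∈ Icc 0 (u 0)⁻¹, HasDerivAt u (u t ^ 2) t :=
    fun t ht => hu t ⟨ht.1, ht.2.trans_lt hT⟩
  have hend : (u 0)⁻¹ ∈ Icc 0 (u 0)⁻¹ := right_mem_Icc.2 (inv_nonneg.2 hu0.le)
  have hinv := inv_add_eq_of_hasDerivAt_sq hu0 hu' _ hend
  have hmono := monotoneOn_of_hasDerivAt_sq hu' (left_mem_Icc.2 hend.1) hend hend.1
  have : 0 < (u (u 0)⁻¹)⁻¹ := inv_pos.2 (hu0.trans_le hmono)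
  linarith

end Riccati

theorem hasDerivAt_inv_sub (c t : ℝ) (ht : t ≠ c) :
    HasDerivAt (fun s => (c - s)⁻¹) ((c - t)⁻¹ ^ 2) t := by
  refine (((hasDerivAt_id' t).const_sub c).inv (sub_ne_zero.2 ht.symm)).congr_deriv ?_
  field_simp

noncomputable def blowupField : Fin 2 → MvPolynomial (Fin 2) ℝ := ![X 0 ^ 2, 1]

@[simp]
theorem eval_blowupField_zero (x : Fin 2 → ℝ) : eval x (blowupField 0) = x 0 ^ 2 := by
  simp [blowupField]

@[simp]
theorem eval_blowupField_one (x : Fin 2 → ℝ) : eval x (blowupField 1) = 1 := by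
  simp [blowupField]

/-- Counterexample to dV without global existence: there is a polynomial ODE on
`ℝ²`, a polynomial `p`, and `ε > 0` with Lie derivative `≥ ε` wherever `p < 0`,
together with a right-maximal solution that blows up at a finite time `T` with
`p < 0` throughout its whole existence interval `[0,T)`. -/
theorem dV_needs_global_existence :
    ∃ (F : Fin 2 → MvPolynomial (Fin 2) ℝ) (f : (Fin 2 → ℝ) → (Fin 2 → ℝ))
      (p : MvPolynomial (Fin 2) ℝ) (ε : ℝ) (T : ℝ) (φ : ℝ → (Fin 2 → ℝ)),
      f = (fun x i => eval x (F i)) ∧ 0 < ε ∧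
      (∀ y : Fin 2 → ℝ, eval y p < 0 →
        ε ≤ ∑ i : Fin 2, eval y (pderiv i p) * f y i) ∧
      0 < T ∧
      (∀ t ∈ Set.Ico (0:ℝ) T, HasDerivAt φ (f (φ t)) t) ∧
      (∀ (T' : ℝ) (ψ : ℝ → (Fin 2 → ℝ)), ψ 0 = φ 0 →
        (∀ t ∈ Set.Ico (0:ℝ) T', HasDerivAt ψ (f (ψ t)) t) → T' ≤ T) ∧
      (∀ t ∈ Set.Ico (0:ℝ) T, eval (φ t) p < 0) := by
  refine ⟨blowupField, fun x i => eval x (blowupField i), X 1 - C 2, 1, 1,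
    fun t => ![(1 - t)⁻¹, t], rfl, one_pos, fun y _ => ?_, one_pos, fun t ht => ?_,
    fun T' ψ hψ0 hψ => ?_, fun t ht => ?_⟩
  · simp [Fin.sum_univ_two]
  · rw [hasDerivAt_pi]
    intro i
    fin_cases i
    · simpa using hasDerivAt_inv_sub 1 t ht.2.ne
    · simpa using hasDerivAt_id' t
  · have hu0 : ψ 0 0 = 1 := by simp [hψ0]
    have hu : ∀ t ∈ Ico 0 T', HasDerivAt (ψ · 0) (ψ t 0 ^ 2) t := fun t ht => by
      simpa using hasDerivAt_pi.1 (hψ t ht) 0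
    simpa [hu0] using le_inv_of_hasDerivAt_sq (hu0 ▸ one_pos) hu
  · simp only [map_sub, eval_X, Matrix.cons_val_one, Matrix.cons_val_fin_one, eval_C, sub_neg]
    linarith [ht.2]
end

section
/- Compact staging set rule (SP_c): Let f be locally Lipschitz, S ⊆ ℝⁿ compact, p a C¹ function with ∇p(y)·f(y) > 0 for all y ∈ S. Assume the solution remains in S as long as it has not entered P. Then the solution enters P in finite time within its existence interval. -/
open scoped ENNReal NNReal
open Set Metric

/-!
If the solution never entered `P`, it would stay in `S` on its whole interval of existence
`[0, T)`. On the compact set `S` the Lie derivative `∇p·f` is bounded below by some `ε > 0` and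
`p` is bounded above, so `p ∘ φ` grows at least like `ε t` and `T` must be finite. But a
solution of a locally Lipschitz ODE that stays in a compact set can be continued past a finite
time: Picard–Lindelöf gives local solutions of a length `δ` that is uniform over the compact set,
and one of them started shortly before `T` extends `φ` beyond `T`, contradicting maximality.
-/

section

variable {E : Type*} [NormedAddCommGroup E] [NormedSpace ℝ E]

lemma mul_sub_le_comp_sub_of_le_fderiv_apply {f : E → E} {p : E → ℝ} (hp : Differentiable ℝ p)
    {φ : ℝ → E} {a b ε : ℝ} (hab : a ≤ b) (hφ : ∀ t ∈ Icc a b, HasDerivAt φ (f (φ t)) t)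
    (hε : ∀ t ∈ Icc a b, ε ≤ fderiv ℝ p (φ t) (f (φ t))) :
    ε * (b - a) ≤ p (φ b) - p (φ a) := by
  have hderiv : ∀ t ∈ Icc a b, HasDerivAt (p ∘ φ) (fderiv ℝ p (φ t) (f (φ t))) t :=
    fun t ht => (hp (φ t)).hasFDerivAt.comp_hasDerivAt t (hφ t ht)
  refine (convex_Icc a b).mul_sub_le_image_sub_of_le_deriv
    (fun t ht => (hderiv t ht).continuousAt.continuousWithinAt)
    (fun t ht => (hderiv t (interior_subset ht)).differentiableAt.differentiableWithinAt)
    (fun t ht => (hderiv t (interior_subset ht)).deriv ▸ hε t (interior_subset ht))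
    a (left_mem_Icc.2 hab) b (right_mem_Icc.2 hab) hab

lemma HasDerivAt.ite_lt {φ α : ℝ → E} {t₁ : ℝ} {v : E} (hφ : HasDerivAt φ v t₁)
    (hα : HasDerivAt α v t₁) (heq : φ t₁ = α t₁) :
    HasDerivAt (fun t => if t < t₁ then φ t else α t) v t₁ := by
  have hleft : HasDerivWithinAt (fun t => if t < t₁ then φ t else α t) v (Iic t₁) t₁ := by
    refine hφ.hasDerivWithinAt.congr (fun t ht => ?_) (by simp [heq])
    rcases (mem_Iic.1 ht).lt_or_eq with h | rfl
    · simp [h]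
    · simp [heq]
  have hright : HasDerivWithinAt (fun t => if t < t₁ then φ t else α t) v (Ici t₁) t₁ :=
    hα.hasDerivWithinAt.congr (fun t ht => by simp [not_lt.2 (mem_Ici.1 ht)]) (by simp)
  simpa [Iic_union_Ici] using hleft.union hright

lemma forall_mem_Ico_hasDerivAt_ite_lt {f : E → E} {φ α : ℝ → E} {a b c t₁ : ℝ}
    (hφ : ∀ t ∈ Icc a t₁, HasDerivAt φ (f (φ t)) t)
    (hα : ∀ t ∈ Ioo c b, HasDerivAt α (f (α t)) t) (hct₁ : c < t₁) (heq : φ t₁ = α t₁) :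
    ∀ t ∈ Ico a b, HasDerivAt (fun s => if s < t₁ then φ s else α s)
      (f (if t < t₁ then φ t else α t)) t := by
  intro t ht
  rcases lt_trichotomy t t₁ with h | rfl | h
  · have hev : (fun s => if s < t₁ then φ s else α s) =ᶠ[nhds t] φ := by
      filter_upwards [Iio_mem_nhds h] with s hs using if_pos hs
    simpa [h] using (hφ t ⟨ht.1, h.le⟩).congr_of_eventuallyEq hev
  · simpa [← heq] using
      (hφ t ⟨ht.1, le_rfl⟩).ite_lt (heq ▸ hα t ⟨hct₁, ht.2⟩) heq
  · have hev : (fun s => if s < t₁ then φ s else α s) =ᶠ[nhds t] α := by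
      filter_upwards [Ioi_mem_nhds h] with s hs using if_neg (not_lt.2 hs.le)
    simpa [not_lt.2 h.le] using (hα t ⟨hct₁.trans h, ht.2⟩).congr_of_eventuallyEq hev

variable [ProperSpace E]

lemma LocallyLipschitz.exists_pos_forall_mem_exists_hasDerivAt {f : E → E}
    (hf : LocallyLipschitz f) {K : Set E} (hK : IsCompact K) :
    ∃ δ > 0, ∀ x ∈ K, ∀ t₀ : ℝ, ∃ α : ℝ → E, α t₀ = x ∧
      ∀ t ∈ Ioo (t₀ - δ) (t₀ + δ), HasDerivAt α (f (α t)) t := by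
  have hK₁ : IsCompact (cthickening 1 K) := hK.cthickening
  obtain ⟨L, hL⟩ := hf.locallyLipschitzOn.exists_lipschitzOnWith_of_compact hK₁
  obtain ⟨M, hM⟩ := hK₁.exists_bound_of_continuousOn hf.continuous.continuousOn
  set δ : ℝ := 1 / (M.toNNReal + 1)
  have hδ : 0 < δ := by positivity
  refine ⟨δ, hδ, fun x hx t₀ => ?_⟩
  have hball : closedBall x 1 ⊆ cthickening 1 K := closedBall_subset_cthickening hx 1
  have hpl : IsPicardLindelof (fun _ => f) (tmin := t₀ - δ) (tmax := t₀ + δ)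
      ⟨t₀, by constructor <;> linarith⟩ x 1 0 M.toNNReal L := by
    refine IsPicardLindelof.of_time_independent
      (fun y hy => (hM y (hball hy)).trans (Real.le_coe_toNNReal M)) (hL.mono hball) ?_
    simp only [add_sub_cancel_left, sub_sub_cancel, max_self, NNReal.coe_one,
      NNReal.coe_zero, sub_zero, δ]
    rw [mul_one_div, div_le_one (by positivity)]
    linarith
  obtain ⟨α, hα₀, hα⟩ := hpl.exists_eq_forall_mem_Icc_hasDerivWithinAt₀
  exact ⟨α, hα₀, fun t ht => (hα t (Ioo_subset_Icc_self ht)).hasDerivAt (Icc_mem_nhds ht.1 ht.2)⟩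

lemma LocallyLipschitz.exists_gt_exists_hasDerivAt_of_forall_mem_isCompact {f : E → E}
    (hf : LocallyLipschitz f) {K : Set E} (hK : IsCompact K) {φ : ℝ → E} {a T : ℝ}
    (haT : a < T) (hφ : ∀ t ∈ Ico a T, HasDerivAt φ (f (φ t)) t)
    (hφK : ∀ t ∈ Ico a T, φ t ∈ K) :
    ∃ T' > T, ∃ ψ : ℝ → E, ψ a = φ a ∧ ∀ t ∈ Ico a T', HasDerivAt ψ (f (ψ t)) t := by
  obtain ⟨δ, hδ, hloc⟩ := hf.exists_pos_forall_mem_exists_hasDerivAt hK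
  set t₁ := max (T - δ / 2) ((a + T) / 2)
  have ht₁ : t₁ ∈ Ioo a T :=
    ⟨lt_max_of_lt_right (by linarith), max_lt (by linarith) (by linarith)⟩
  obtain ⟨α, hα₁, hα⟩ := hloc (φ t₁) (hφK t₁ ⟨ht₁.1.le, ht₁.2⟩) t₁
  refine ⟨t₁ + δ, by linarith [le_max_left (T - δ / 2) ((a + T) / 2)],
    fun t => if t < t₁ then φ t else α t, if_pos ht₁.1, ?_⟩
  exact forall_mem_Ico_hasDerivAt_ite_lt (fun t ht => hφ t ⟨ht.1, ht.2.trans_lt ht₁.2⟩) hα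
    (by linarith) hα₁.symm

end

/-- Compact staging set rule SP_c: for a locally Lipschitz ODE with right-maximal
solution `φ` on `[0,T)`, if the solution stays in the compact set `S` as long as
it has not entered `P`, and the C¹ function `p` has strictly positive Lie
derivative `∇p·f > 0` on `S`, then the solution enters `P` in finite time. -/
theorem staging_set_compact (n : ℕ) (f : (Fin n → ℝ) → (Fin n → ℝ))
    (hf : LocallyLipschitz f)
    (T : ℝ≥0∞) (hT : 0 < T) (φ : ℝ → (Fin n → ℝ))
    (hsol : ∀ t : ℝ, 0 ≤ t → ENNReal.ofReal t < T → HasDerivAt φ (f (φ t)) t)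
    (hmax : ∀ (T' : ℝ) (ψ : ℝ → (Fin n → ℝ)), ψ 0 = φ 0 →
      (∀ t ∈ Set.Ico (0:ℝ) T', HasDerivAt ψ (f (ψ t)) t) → ENNReal.ofReal T' ≤ T)
    (S P : Set (Fin n → ℝ)) (hSc : IsCompact S)
    (p : (Fin n → ℝ) → ℝ) (hp : ContDiff ℝ 1 p)
    (hstage : ∀ t : ℝ, 0 ≤ t → ENNReal.ofReal t < T →
      (∀ s ∈ Set.Icc (0:ℝ) t, φ s ∉ P) → φ t ∈ S)
    (hlie : ∀ y ∈ S, 0 < fderiv ℝ p y (f y)) :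
    ∃ τ : ℝ, 0 ≤ τ ∧ ENNReal.ofReal τ < T ∧ φ τ ∈ P := by
  by_contra! hP
  have hbefore : ∀ t s, ENNReal.ofReal t < T → s ∈ Icc 0 t → ENNReal.ofReal s < T :=
    fun t s htT hs => (ENNReal.ofReal_le_ofReal hs.2).trans_lt htT
  have hS : ∀ t, 0 ≤ t → ENNReal.ofReal t < T → φ t ∈ S := fun t ht htT =>
    hstage t ht htT fun s hs => hP s hs.1 (hbefore t s htT hs)
  obtain ⟨ε, hε, hεS⟩ := hSc.exists_forall_le'
    ((hp.continuous_fderiv one_ne_zero).clm_apply hf.continuous).continuousOn hlie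
  obtain ⟨B, hB⟩ := hSc.bddAbove_image hp.continuous.continuousOn
  have hgrowth : ∀ t, 0 ≤ t → ENNReal.ofReal t < T → ε * t ≤ B - p (φ 0) := fun t ht htT => by
    have := mul_sub_le_comp_sub_of_le_fderiv_apply (hp.differentiable one_ne_zero) ht
      (fun s hs => hsol s hs.1 (hbefore t s htT hs))
      (fun s hs => hεS _ (hS s hs.1 (hbefore t s htT hs)))
    linarith [hB (mem_image_of_mem p (hS t ht htT))]
  have hTtop : T ≠ ⊤ := by
    rintro rfl
    have := hgrowth (|B - p (φ 0)| / ε + 1) (by positivity) ENNReal.ofReal_lt_top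
    rw [mul_add, mul_div_cancel₀ _ hε.ne', mul_one] at this
    linarith [le_abs_self (B - p (φ 0))]
  have hT₀ : 0 < T.toReal := ENNReal.toReal_pos hT.ne' hTtop
  have hlt : ∀ t ∈ Ico 0 T.toReal, ENNReal.ofReal t < T := fun t ht =>
    (ENNReal.ofReal_lt_iff_lt_toReal ht.1 hTtop).2 ht.2
  obtain ⟨T', hT', ψ, hψ0, hψ⟩ := hf.exists_gt_exists_hasDerivAt_of_forall_mem_isCompact hSc hT₀
    (fun t ht => hsol t ht.1 (hlt t ht)) (fun t ht => hS t ht.1 (hlt t ht))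
  have hT'T := hmax T' ψ hψ0 hψ
  rw [← ENNReal.ofReal_toReal hTtop, ENNReal.ofReal_le_ofReal_iff hT₀.le] at hT'T
  linarith
end

section
/- Set Lyapunov rule (SLyap): Let f be locally Lipschitz, p a C¹ function, K ⊆ ℝⁿ compact with {p ≥ 0} ⊆ K, and P ⊆ ℝⁿ open with ∇p(y)·f(y) > 0 for all y ∈ K \ P. Then every solution starting at a state x₀ with p(x₀) ≥ 0 (or p(x₀) > 0) enters P in finite time. -/
/-!
While the solution avoids `P`, it stays in `{p ≥ 0}`: `p ∘ φ` starts nonnegative and cannot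
cross zero, because wherever it vanishes we are in `K \ P` and its derivative `∇p·f` is positive.
So the solution stays in the compact set `K \ P`, on which `∇p·f ≥ ε > 0`. If it existed for all
time, `p ∘ φ` would grow at least like `ε t`, which is impossible as `p` is bounded on `K`. If it
exists only up to a finite time `T`, then a cluster point of `φ` at `T` in `K \ P`, together with
a local existence time that is uniform near that point, extends `φ` beyond `T`, contradicting
maximality.
-/

open scoped ENNReal NNReal Topology
open Set Metric Filter

section ODE

variable {E : Type*} [NormedAddCommGroup E] {f : E → E}

theorem IsPicardLindelof.of_locallyLipschitz (hf : LocallyLipschitz f) (x₀ : E) :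
    ∃ (ε : ℝ) (hε : 0 < ε) (a r L K : ℝ≥0), 0 < r ∧ ∀ t₀ : ℝ, IsPicardLindelof (fun _ ↦ f)
      (tmin := t₀ - ε) (tmax := t₀ + ε) ⟨t₀, by simp [hε.le]⟩ x₀ a r L K := by
  obtain ⟨K, s, hs, hK⟩ := hf x₀
  obtain ⟨a, ha, has⟩ := Metric.mem_nhds_iff.mp hs
  have hsub : closedBall x₀ (a / 2) ⊆ s := (closedBall_subset_ball (half_lt_self ha)).trans has
  set L : ℝ := K * a + ‖f x₀‖ + 1
  have hL : 0 < L := by positivity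
  have hbound : ∀ x ∈ closedBall x₀ (a / 2), ‖f x‖ ≤ L := fun x hx ↦
    calc ‖f x‖ ≤ ‖f x - f x₀‖ + ‖f x₀‖ := norm_le_norm_sub_add _ _
      _ ≤ K * ‖x - x₀‖ + ‖f x₀‖ := by
        gcongr
        exact hK.norm_sub_le (hsub hx) (hsub (mem_closedBall_self (by positivity)))
      _ ≤ L := by
        have : ‖x - x₀‖ ≤ a := (mem_closedBall_iff_norm.mp hx).trans (half_le_self ha.le)
        have : (K : ℝ) * ‖x - x₀‖ ≤ K * a := by gcongr
        linarith
  refine ⟨a / 4 / L, by positivity, ⟨a / 2, by positivity⟩, ⟨a / 4, by positivity⟩, ⟨L, hL.le⟩,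
    K, show (0 : ℝ) < a / 4 by positivity, fun t₀ ↦ ?_⟩
  refine IsPicardLindelof.of_time_independent hbound (hK.mono hsub) ?_
  simp only [add_sub_cancel_left, sub_sub_cancel, max_self]
  show L * (a / 4 / L) ≤ a / 2 - a / 4
  rw [mul_div_cancel₀ _ hL.ne']
  linarith

variable [NormedSpace ℝ E]

theorem LocallyLipschitz.exists_forall_mem_closedBall_exists_eq_forall_mem_Ioo_hasDerivAt
    [CompleteSpace E] (hf : LocallyLipschitz f) (x₀ : E) :
    ∃ r > (0 : ℝ), ∃ ε > (0 : ℝ), ∀ x ∈ closedBall x₀ r, ∀ t₀ : ℝ, ∃ α : ℝ → E, α t₀ = x ∧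
      ∀ t ∈ Ioo (t₀ - ε) (t₀ + ε), HasDerivAt α (f (α t)) t := by
  obtain ⟨ε, hε, a, r, L, K, hr, hpl⟩ := IsPicardLindelof.of_locallyLipschitz hf x₀
  refine ⟨r, hr, ε, hε, fun x hx t₀ ↦ ?_⟩
  obtain ⟨α, hα₀, hα⟩ := (hpl t₀).exists_eq_forall_mem_Icc_hasDerivWithinAt hx
  exact ⟨α, hα₀, fun t ht ↦ (hα t (Ioo_subset_Icc_self ht)).hasDerivAt (Icc_mem_nhds ht.1 ht.2)⟩

theorem HasDerivAt.ite_le {φ α : ℝ → E} {c : ℝ} {v : E} (hφ : HasDerivAt φ v c)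
    (hα : HasDerivAt α v c) (h : φ c = α c) :
    HasDerivAt (fun t ↦ if t ≤ c then φ t else α t) v c := by
  have hleft : HasDerivWithinAt (fun t ↦ if t ≤ c then φ t else α t) v (Iic c) c :=
    hφ.hasDerivWithinAt.congr (fun t ht ↦ if_pos ht) (if_pos le_rfl)
  have hright : HasDerivWithinAt (fun t ↦ if t ≤ c then φ t else α t) v (Ici c) c := by
    refine hα.hasDerivWithinAt.congr (fun t ht ↦ ?_) (by rw [if_pos le_rfl, h])
    rcases (mem_Ici.mp ht).eq_or_lt with rfl | hlt
    · rw [if_pos le_rfl, h]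
    · exact if_neg hlt.not_ge
  simpa only [Iic_union_Ici, hasDerivWithinAt_univ] using hleft.union hright

theorem LocallyLipschitz.exists_extension_of_mapsTo_isCompact [CompleteSpace E]
    (hf : LocallyLipschitz f) {S : Set E} (hS : IsCompact S) {T : ℝ} (hT : 0 < T) {φ : ℝ → E}
    (hφ : ∀ t ∈ Ico 0 T, HasDerivAt φ (f (φ t)) t) (hφS : MapsTo φ (Ico 0 T) S) :
    ∃ T' > T, ∃ ψ : ℝ → E, ψ 0 = φ 0 ∧ ∀ t ∈ Ico 0 T', HasDerivAt ψ (f (ψ t)) t := by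
  obtain ⟨y, -, hy⟩ := hS.exists_mapClusterPt (f := 𝓝[<] T)
    (tendsto_principal.mpr (mem_of_superset (Ico_mem_nhdsLT hT) hφS))
  -- Near `y` solutions exist for a time `ε` independent of the initial state, so restarting at
  -- some `t₁ > T - ε / 2` with `φ t₁` close to `y` goes beyond `T`.
  obtain ⟨r, hr, ε, hε, hsol⟩ :=
    hf.exists_forall_mem_closedBall_exists_eq_forall_mem_Ioo_hasDerivAt y
  obtain ⟨t₁, hφt₁, ht₁⟩ := ((hy.frequently (closedBall_mem_nhds y hr)).and_eventually
    (Ioo_mem_nhdsLT (max_lt hT (sub_lt_self T (half_pos hε))))).exists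
  obtain ⟨α, hα₀, hα⟩ := hsol (φ t₁) hφt₁ t₁
  have ht₁0 : 0 ≤ t₁ := ((le_max_left _ _).trans_lt ht₁.1).le
  have hT_lt : T < t₁ + ε / 2 := by linarith [(le_max_right 0 (T - ε / 2)).trans_lt ht₁.1]
  refine ⟨t₁ + ε / 2, hT_lt, fun t ↦ if t ≤ t₁ then φ t else α t, if_pos ht₁0, fun t ht ↦ ?_⟩
  show HasDerivAt _ (f (if t ≤ t₁ then φ t else α t)) t
  rcases lt_trichotomy t t₁ with hlt | rfl | hgt
  · rw [if_pos hlt.le]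
    refine (hφ t ⟨ht.1, hlt.trans ht₁.2⟩).congr_of_eventuallyEq ?_
    filter_upwards [Iio_mem_nhds hlt] with s hs using if_pos (le_of_lt hs)
  · rw [if_pos le_rfl]
    refine (hφ t ⟨ht₁0, ht₁.2⟩).ite_le ?_ hα₀.symm
    simpa only [hα₀] using hα t ⟨by linarith, by linarith⟩
  · rw [if_neg hgt.not_ge]
    refine (hα t ⟨by linarith, by linarith [ht.2]⟩).congr_of_eventuallyEq ?_
    filter_upwards [Ioi_mem_nhds hgt] with s hs using if_neg (not_le.mpr hs)

end ODE

theorem image_nonneg_of_hasDerivAt_pos_of_eq_zero {g g' : ℝ → ℝ} {a b : ℝ}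
    (hg : ∀ t ∈ Icc a b, HasDerivAt g (g' t) t) (ha : 0 ≤ g a)
    (hpos : ∀ t ∈ Ico a b, g t = 0 → 0 < g' t) : ∀ t ∈ Icc a b, 0 ≤ g t :=
  image_le_of_deriv_right_lt_deriv_boundary' continuousOn_const
    (fun _ _ ↦ hasDerivWithinAt_const _ _ 0) ha
    (fun t ht ↦ (hg t ht).continuousAt.continuousWithinAt)
    (fun t ht ↦ (hg t (Ico_subset_Icc_self ht)).hasDerivWithinAt)
    (fun t ht h ↦ hpos t ht h.symm)

section Lyapunov

variable {E : Type*} [NormedAddCommGroup E] [NormedSpace ℝ E] {f : E → E} {V : E → ℝ}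

theorem Differentiable.hasDerivAt_comp_solution (hV : Differentiable ℝ V) {φ : ℝ → E} {t : ℝ}
    (hφ : HasDerivAt φ (f (φ t)) t) :
    HasDerivAt (fun s ↦ V (φ s)) (fderiv ℝ V (φ t) (f (φ t))) t :=
  (hV (φ t)).hasFDerivAt.comp_hasDerivAt t hφ

theorem exists_nonneg_notMem_of_fderiv_pos (hf : Continuous f) (hV : ContDiff ℝ 1 V)
    {S : Set E} (hS : IsCompact S) (hpos : ∀ y ∈ S, 0 < fderiv ℝ V y (f y)) {φ : ℝ → E}
    (hφ : ∀ t, 0 ≤ t → HasDerivAt φ (f (φ t)) t) : ∃ t, 0 ≤ t ∧ φ t ∉ S := by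
  by_contra! hφS
  obtain ⟨ε, hε, hε_le⟩ := hS.exists_forall_le'
    ((hV.continuous_fderiv one_ne_zero).clm_apply hf).continuousOn hpos
  obtain ⟨M, hM⟩ := hS.bddAbove_image hV.continuous.continuousOn
  have hVφ : ∀ t, 0 ≤ t → HasDerivAt (fun s ↦ V (φ s)) (fderiv ℝ V (φ t) (f (φ t))) t :=
    fun t ht ↦ (hV.differentiable one_ne_zero).hasDerivAt_comp_solution (hφ t ht)
  have hgrowth : ∀ t, 0 ≤ t → ε * (t - 0) ≤ V (φ t) - V (φ 0) := fun t ht ↦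
    (convex_Ici 0).mul_sub_le_image_sub_of_le_deriv
      (fun s hs ↦ (hVφ s hs).continuousAt.continuousWithinAt)
      (fun s hs ↦ (hVφ s (interior_subset hs)).differentiableAt.differentiableWithinAt)
      (fun s hs ↦ (hVφ s (interior_subset hs)).deriv ▸ hε_le _ (hφS s (interior_subset hs)))
      0 self_mem_Ici t ht ht
  set t := |M - V (φ 0)| / ε + 1
  have ht : 0 ≤ t := by positivity
  have hεt : ε * t = |M - V (φ 0)| + ε := by simp only [t]; field_simp
  have hle := hgrowth t ht
  have hVt : V (φ t) ≤ M := hM ⟨φ t, hφS t ht, rfl⟩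
  rw [sub_zero, hεt] at hle
  linarith [le_abs_self (M - V (φ 0))]

end Lyapunov

/-- Set Lyapunov rule SLyap: if `{p ≥ 0} ⊆ K` with `K` compact, `P` is open, and
`∇p·f > 0` on `K \ P`, then every (right-maximal) solution starting where
`p ≥ 0` enters `P` in finite time within its existence interval. -/
theorem set_lyapunov (n : ℕ) (f : (Fin n → ℝ) → (Fin n → ℝ))
    (hf : LocallyLipschitz f)
    (p : (Fin n → ℝ) → ℝ) (hp : ContDiff ℝ 1 p)
    (K : Set (Fin n → ℝ)) (hK : IsCompact K)
    (hsub : {y : Fin n → ℝ | 0 ≤ p y} ⊆ K)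
    (P : Set (Fin n → ℝ)) (hP : IsOpen P)
    (hlie : ∀ y ∈ K \ P, 0 < fderiv ℝ p y (f y))
    (T : ℝ≥0∞) (hT : 0 < T) (φ : ℝ → (Fin n → ℝ)) (hx₀ : 0 ≤ p (φ 0))
    (hsol : ∀ t : ℝ, 0 ≤ t → ENNReal.ofReal t < T → HasDerivAt φ (f (φ t)) t)
    (hmax : ∀ (T' : ℝ) (ψ : ℝ → (Fin n → ℝ)), ψ 0 = φ 0 →
      (∀ t ∈ Set.Ico (0:ℝ) T', HasDerivAt ψ (f (ψ t)) t) → ENNReal.ofReal T' ≤ T) :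
    ∃ τ : ℝ, 0 ≤ τ ∧ ENNReal.ofReal τ < T ∧ φ τ ∈ P := by
  by_contra! hφP
  have hφKP : ∀ t, 0 ≤ t → ENNReal.ofReal t < T → φ t ∈ K \ P := by
    intro t ht htT
    have hdom : ∀ s ∈ Icc 0 t, 0 ≤ s ∧ ENNReal.ofReal s < T := fun s hs ↦
      ⟨hs.1, (ENNReal.ofReal_le_ofReal hs.2).trans_lt htT⟩
    have hpφ : ∀ s ∈ Icc 0 t, 0 ≤ p (φ s) := by
      refine image_nonneg_of_hasDerivAt_pos_of_eq_zero (g' := fun s ↦ fderiv ℝ p (φ s) (f (φ s)))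
        (fun s hs ↦ ?_) hx₀ (fun s hs hps ↦ ?_)
      · obtain ⟨hs₀, hsT⟩ := hdom s hs
        exact (hp.differentiable one_ne_zero).hasDerivAt_comp_solution (hsol s hs₀ hsT)
      · obtain ⟨hs₀, hsT⟩ := hdom s (Ico_subset_Icc_self hs)
        exact hlie _ ⟨hsub hps.ge, hφP s hs₀ hsT⟩
    exact ⟨hsub (hpφ t ⟨ht, le_rfl⟩), hφP t ht htT⟩
  rcases eq_or_ne T ⊤ with rfl | hT_top
  · obtain ⟨t, ht, hφt⟩ := exists_nonneg_notMem_of_fderiv_pos hf.continuous hp (hK.diff hP) hlie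
      fun t ht ↦ hsol t ht ENNReal.ofReal_lt_top
    exact hφt (hφKP t ht ENNReal.ofReal_lt_top)
  · obtain ⟨τ, hτ, rfl⟩ : ∃ τ : ℝ, 0 < τ ∧ T = ENNReal.ofReal τ :=
      ⟨T.toReal, ENNReal.toReal_pos hT.ne' hT_top, (ENNReal.ofReal_toReal hT_top).symm⟩
    have hdom : ∀ t ∈ Ico 0 τ, ENNReal.ofReal t < ENNReal.ofReal τ := fun t ht ↦
      (ENNReal.ofReal_lt_ofReal_iff hτ).mpr ht.2
    obtain ⟨T', hT', ψ, hψ₀, hψ⟩ := hf.exists_extension_of_mapsTo_isCompact (hK.diff hP) hτ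
      (fun t ht ↦ hsol t ht.1 (hdom t ht)) (fun t ht ↦ hφKP t ht.1 (hdom t ht))
    exact hT'.not_ge ((ENNReal.ofReal_le_ofReal_iff hτ.le).mp (hmax T' ψ hψ₀ hψ))
end

section
/- For the nonlinear planar ODE u' = -v - u(1/4 - u² - v²), v' = u - v(1/4 - u² - v²): every solution starting on the unit circle u² + v² = 1 reaches a state with u² + v² ≥ 2 at some finite time within its maximal existence interval. -/
open scoped ENNReal
open Real Set

/-! The squared radius `r = u² + v²` of a solution obeys the autonomous Bernoulli equation
`r' = 2r(r - 1/4)`, whose solution with `r(0) = 1` is `r(t) = 1 / (4 - 3 e^{t/2})`: indeed `1/r`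
satisfies the linear equation `w' = w/2 - 2`. This profile reaches `2` at `τ = 2 log (7/6)` and blows
up only at `2 log (4/3) > τ`. Rotating its square root at unit angular speed gives an explicit
solution on `[0, 2 log (4/3))`, so maximality forces the existence interval past `τ`, and uniqueness
for the Bernoulli equation (Grönwall) pins `r(τ) = 2`. -/

def SpiralODEAt (u v : ℝ → ℝ) (t : ℝ) : Prop :=
  HasDerivAt u (-(v t) - u t * (1/4 - u t ^ 2 - v t ^ 2)) t ∧
  HasDerivAt v (u t - v t * (1/4 - u t ^ 2 - v t ^ 2)) t

noncomputable def radialField (r : ℝ) : ℝ := 2 * r * (r - 1/4)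

theorem eqOn_zero_of_hasDerivAt_smul_self {E : Type*} [NormedAddCommGroup E] [NormedSpace ℝ E]
    {D : ℝ → E} {k : ℝ → ℝ} {a b : ℝ} (hD : ∀ t ∈ Icc a b, HasDerivAt D (k t • D t) t)
    (hk : ContinuousOn k (Icc a b)) (ha : D a = 0) : ∀ t ∈ Icc a b, D t = 0 := by
  obtain ⟨K, hK⟩ := isCompact_Icc.exists_bound_of_continuousOn hk
  refine eq_zero_of_abs_deriv_le_mul_abs_self_of_eq_zero_right (K := K)
    (fun t ht => (hD t ht).continuousAt.continuousWithinAt)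
    (fun t ht => (hD t (Ico_subset_Icc_self ht)).hasDerivWithinAt) ha fun t ht => ?_
  rw [norm_smul]
  exact mul_le_mul_of_nonneg_right (hK t (Ico_subset_Icc_self ht)) (norm_nonneg _)

theorem eqOn_Icc_of_hasDerivAt_radialField {r R : ℝ → ℝ} {a b : ℝ}
    (hr : ∀ t ∈ Icc a b, HasDerivAt r (radialField (r t)) t)
    (hR : ∀ t ∈ Icc a b, HasDerivAt R (radialField (R t)) t) (ha : r a = R a) :
    ∀ t ∈ Icc a b, r t = R t := by
  have hcont : ∀ f : ℝ → ℝ, (∀ t ∈ Icc a b, HasDerivAt f (radialField (f t)) t) →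
      ContinuousOn f (Icc a b) := fun f hf t ht => (hf t ht).continuousAt.continuousWithinAt
  have hdiff : ∀ t ∈ Icc a b,
      HasDerivAt (fun s => r s - R s) ((2 * (r t + R t) - 1/2) • (r t - R t)) t := fun t ht =>
    ((hr t ht).sub (hR t ht)).congr_deriv (by simp only [radialField, smul_eq_mul]; ring)
  have hk : ContinuousOn (fun t => 2 * (r t + R t) - 1/2) (Icc a b) := by
    exact (continuousOn_const.mul ((hcont r hr).add (hcont R hR))).sub continuousOn_const
  intro t ht
  exact sub_eq_zero.mp (eqOn_zero_of_hasDerivAt_smul_self hdiff hk (sub_eq_zero.mpr ha) t ht)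

theorem SpiralODEAt.hasDerivAt_normSq {u v : ℝ → ℝ} {t : ℝ} (h : SpiralODEAt u v t) :
    HasDerivAt (fun s => u s ^ 2 + v s ^ 2) (radialField (u t ^ 2 + v t ^ 2)) t :=
  ((h.1.pow 2).add (h.2.pow 2)).congr_deriv (by simp only [radialField]; push_cast; ring)

noncomputable def radialProfile (t : ℝ) : ℝ := (4 - 3 * exp (t / 2))⁻¹

theorem radialProfile_zero : radialProfile 0 = 1 := by
  norm_num [radialProfile]

theorem radialProfile_two_mul_log : radialProfile (2 * log (7/6)) = 2 := by
  norm_num [radialProfile, exp_log]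

theorem radialProfile_denom_pos {t : ℝ} (ht : t < 2 * log (4/3)) : 0 < 4 - 3 * exp (t / 2) := by
  have : exp (t / 2) < 4/3 := by
    rw [← exp_log (show (0:ℝ) < 4/3 by norm_num)]
    exact exp_lt_exp.mpr (by linarith)
  linarith

theorem radialProfile_pos {t : ℝ} (ht : t < 2 * log (4/3)) : 0 < radialProfile t :=
  inv_pos.mpr (radialProfile_denom_pos ht)

theorem hasDerivAt_radialProfile {t : ℝ} (ht : t < 2 * log (4/3)) :
    HasDerivAt radialProfile (radialField (radialProfile t)) t := by
  have hW := radialProfile_denom_pos ht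
  have hexp : HasDerivAt (fun s => 4 - 3 * exp (s / 2)) (-(3/2) * exp (t / 2)) t := by
    have := (((hasDerivAt_id t).div_const 2).exp.const_mul 3).const_sub 4
    exact this.congr_deriv (by simp only [id]; ring)
  refine (hexp.inv hW.ne').congr_deriv ?_
  simp only [radialProfile, radialField]
  field_simp
  ring

theorem hasDerivAt_sqrt_radialProfile {t : ℝ} (ht : t < 2 * log (4/3)) :
    HasDerivAt (fun s => √(radialProfile s))
      (√(radialProfile t) * (√(radialProfile t) ^ 2 - 1/4)) t := by
  have hR := radialProfile_pos ht
  refine ((hasDerivAt_radialProfile ht).sqrt hR.ne').congr_deriv ?_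
  have hsqrt : √(radialProfile t) ^ 2 = radialProfile t := sq_sqrt hR.le
  have hne : √(radialProfile t) ≠ 0 := (sqrt_pos.mpr hR).ne'
  rw [hsqrt, radialField]
  field_simp
  rw [hsqrt]
  ring

theorem spiralODEAt_rotate {ρ : ℝ → ℝ} {c s t : ℝ} (hcs : c ^ 2 + s ^ 2 = 1)
    (hρ : HasDerivAt ρ (ρ t * (ρ t ^ 2 - 1/4)) t) :
    SpiralODEAt (fun t => ρ t * (c * cos t - s * sin t))
      (fun t => ρ t * (s * cos t + c * sin t)) t := by
  have hrot : (c * cos t - s * sin t) ^ 2 + (s * cos t + c * sin t) ^ 2 = 1 := by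
    linear_combination (c ^ 2 + s ^ 2) * sin_sq_add_cos_sq t + hcs
  constructor
  · refine (hρ.mul (((hasDerivAt_cos t).const_mul c).sub
      ((hasDerivAt_sin t).const_mul s))).congr_deriv ?_
    simp only [Pi.sub_apply]
    linear_combination (-(ρ t) ^ 3 * (c * cos t - s * sin t)) * hrot
  · refine (hρ.mul (((hasDerivAt_cos t).const_mul s).add
      ((hasDerivAt_sin t).const_mul c))).congr_deriv ?_
    simp only [Pi.add_apply]
    linear_combination (-(ρ t) ^ 3 * (s * cos t + c * sin t)) * hrot

theorem nonlinear_spiral_liveness_general (T : ℝ≥0∞) (u v : ℝ → ℝ)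
    (hu : ∀ t : ℝ, 0 ≤ t → ENNReal.ofReal t < T →
      HasDerivAt u (-(v t) - u t * (1/4 - u t ^ 2 - v t ^ 2)) t)
    (hv : ∀ t : ℝ, 0 ≤ t → ENNReal.ofReal t < T →
      HasDerivAt v (u t - v t * (1/4 - u t ^ 2 - v t ^ 2)) t)
    (hmax : ∀ (T' : ℝ) (u' v' : ℝ → ℝ), u' 0 = u 0 → v' 0 = v 0 →
      (∀ t ∈ Set.Ico (0:ℝ) T',
        HasDerivAt u' (-(v' t) - u' t * (1/4 - u' t ^ 2 - v' t ^ 2)) t ∧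
        HasDerivAt v' (u' t - v' t * (1/4 - u' t ^ 2 - v' t ^ 2)) t) →
      ENNReal.ofReal T' ≤ T)
    (hinit : u 0 ^ 2 + v 0 ^ 2 = 1) :
    ∃ τ : ℝ, 0 ≤ τ ∧ ENNReal.ofReal τ < T ∧ 2 ≤ u τ ^ 2 + v τ ^ 2 := by
  set τ := 2 * log (7/6)
  have hτ0 : 0 ≤ τ := by positivity
  have hτ : τ < 2 * log (4/3) := by
    have := log_lt_log (by norm_num : (0:ℝ) < 7/6) (by norm_num : (7/6:ℝ) < 4/3)
    linarith
  have hT : ENNReal.ofReal (2 * log (4/3)) ≤ T :=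
    hmax _ _ _ (by simp [radialProfile_zero]) (by simp [radialProfile_zero])
      fun t ht => spiralODEAt_rotate hinit (hasDerivAt_sqrt_radialProfile ht.2)
  have hlt : ∀ t ∈ Icc 0 τ, ENNReal.ofReal t < T := fun t ht =>
    ((ENNReal.ofReal_lt_ofReal_iff_of_nonneg ht.1).mpr (ht.2.trans_lt hτ)).trans_le hT
  have hr : u τ ^ 2 + v τ ^ 2 = radialProfile τ :=
    eqOn_Icc_of_hasDerivAt_radialField
      (fun t ht => SpiralODEAt.hasDerivAt_normSq ⟨hu t ht.1 (hlt t ht), hv t ht.1 (hlt t ht)⟩)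
      (fun t ht => hasDerivAt_radialProfile (ht.2.trans_lt hτ))
      (by rw [hinit, radialProfile_zero]) τ (right_mem_Icc.mpr hτ0)
  exact ⟨τ, hτ0, hlt τ (right_mem_Icc.mpr hτ0), (hr.trans radialProfile_two_mul_log).ge⟩

/-- For the nonlinear planar ODE `u' = -v - u(1/4 - u² - v²),
`v' = u - v(1/4 - u² - v²)`, every right-maximal solution starting on the unit
circle reaches a state with `u² + v² ≥ 2` within its existence interval. -/
theorem nonlinear_spiral_liveness (T : ℝ≥0∞) (hT : 0 < T) (u v : ℝ → ℝ)
    (hu : ∀ t : ℝ, 0 ≤ t → ENNReal.ofReal t < T →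
      HasDerivAt u (-(v t) - u t * (1/4 - u t ^ 2 - v t ^ 2)) t)
    (hv : ∀ t : ℝ, 0 ≤ t → ENNReal.ofReal t < T →
      HasDerivAt v (u t - v t * (1/4 - u t ^ 2 - v t ^ 2)) t)
    (hmax : ∀ (T' : ℝ) (u' v' : ℝ → ℝ), u' 0 = u 0 → v' 0 = v 0 →
      (∀ t ∈ Set.Ico (0:ℝ) T',
        HasDerivAt u' (-(v' t) - u' t * (1/4 - u' t ^ 2 - v' t ^ 2)) t ∧
        HasDerivAt v' (u' t - v' t * (1/4 - u' t ^ 2 - v' t ^ 2)) t) →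
      ENNReal.ofReal T' ≤ T)
    (hinit : u 0 ^ 2 + v 0 ^ 2 = 1) :
    ∃ τ : ℝ, 0 ≤ τ ∧ ENNReal.ofReal τ < T ∧ 2 ≤ u τ ^ 2 + v τ ^ 2 :=
  nonlinear_spiral_liveness_general T u v hu hv hmax hinit
end
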